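/- arXiv:1209.5906 — 3 statements merged into one kernel-verified Lean document; each statement's English description precedes it below -/
import Mathlib

section
/- The A(K_{p,q})-coronal of the complete bipartite graph K_{p,q} equals ((p+q)x + 2pq)/(x² − pq), for all real x with x² ≠ pq (and xI − A(K_{p,q}) invertible). -/
/-!
If `(xI - M) v = 1`, then `(xI - M)⁻¹ 1 = v`, so the coronal is `∑ vᵢ`. For `K_{p,q}` the
solution is constant on each side, `v = (a, …, a, b, …, b)` with `x a - q b = 1` and
`x b - p a = 1`, i.e. `a = (x + q)/(x² - pq)`, `b = (x + p)/(x² - pq)`; summing gives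
`p a + q b = ((p + q) x + 2pq)/(x² - pq)`.
-/

open Matrix BigOperators

/-- The `M`-coronal `Γ_M(x) = 1ᵀ (xI - M)⁻¹ 1`, the sum of the entries of `(xI - M)⁻¹`. -/
noncomputable def coronal {n : Type*} [Fintype n] [DecidableEq n]
    (M : Matrix n n ℝ) (x : ℝ) : ℝ :=
  ∑ i, ∑ j, (x • (1 : Matrix n n ℝ) - M)⁻¹ i j

instance {V W : Type*} [DecidableEq V] [DecidableEq W] :
    DecidableRel (completeBipartiteGraph V W).Adj := fun a b => by
  simp only [completeBipartiteGraph]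
  infer_instance

theorem coronal_eq_sum_of_mulVec_eq_one {n : Type*} [Fintype n] [DecidableEq n]
    {M : Matrix n n ℝ} {x : ℝ} (hinv : IsUnit (x • (1 : Matrix n n ℝ) - M).det)
    {v : n → ℝ} (hv : (x • (1 : Matrix n n ℝ) - M) *ᵥ v = 1) :
    coronal M x = ∑ i, v i := by
  have hsol : (x • (1 : Matrix n n ℝ) - M)⁻¹ *ᵥ 1 = v := by
    rw [← hv, mulVec_mulVec, nonsing_inv_mul _ hinv, one_mulVec]
  simp only [coronal, ← hsol, mulVec, dotProduct, Pi.one_apply, mul_one]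

section CompleteBipartite

variable {V W R : Type*} [DecidableEq V] [DecidableEq W]

theorem adjMatrix_completeBipartiteGraph [Zero R] [One R] :
    (completeBipartiteGraph V W).adjMatrix R =
      fromBlocks 0 (of fun _ _ => 1) (of fun _ _ => 1) 0 := by
  ext (i | i) (j | j) <;> simp [SimpleGraph.adjMatrix_apply]

theorem adjMatrix_completeBipartiteGraph_mulVec_elim_const [Fintype V] [Fintype W]
    [NonAssocSemiring R] (a b : R) :
    (completeBipartiteGraph V W).adjMatrix R *ᵥ Sum.elim (fun _ => a) (fun _ => b) =
      Sum.elim (fun _ => Fintype.card W • b) (fun _ => Fintype.card V • a) := by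
  rw [adjMatrix_completeBipartiteGraph, fromBlocks_mulVec]
  ext (i | i) <;> simp [mulVec, dotProduct]

end CompleteBipartite

theorem coronal_adj_completeBipartite_general (p q : ℕ) (x : ℝ)
    (hx : x ^ 2 ≠ (p : ℝ) * q)
    (hinv : IsUnit (x • (1 : Matrix (Fin p ⊕ Fin q) (Fin p ⊕ Fin q) ℝ)
      - (completeBipartiteGraph (Fin p) (Fin q)).adjMatrix ℝ).det) :
    coronal ((completeBipartiteGraph (Fin p) (Fin q)).adjMatrix ℝ) x =
      ((p + q : ℝ) * x + 2 * p * q) / (x ^ 2 - p * q) := by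
  have hd : x ^ 2 - (p : ℝ) * q ≠ 0 := sub_ne_zero.mpr hx
  set a := (x + q) / (x ^ 2 - p * q)
  set b := (x + p) / (x ^ 2 - p * q)
  have hv : (x • (1 : Matrix (Fin p ⊕ Fin q) (Fin p ⊕ Fin q) ℝ)
      - (completeBipartiteGraph (Fin p) (Fin q)).adjMatrix ℝ) *ᵥ
        Sum.elim (fun _ => a) (fun _ => b) = 1 := by
    rw [sub_mulVec, smul_mulVec, one_mulVec, adjMatrix_completeBipartiteGraph_mulVec_elim_const]
    ext (i | i) <;> simp only [a, b, Pi.sub_apply, Pi.smul_apply, Sum.elim_inl, Sum.elim_inr,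
      Fintype.card_fin, nsmul_eq_mul, smul_eq_mul, Pi.one_apply] <;>
      rw [mul_div_assoc', mul_div_assoc', ← sub_div, div_eq_one_iff_eq hd] <;> ring
  rw [coronal_eq_sum_of_mulVec_eq_one hinv hv, Fintype.sum_sum_type]
  simp only [Sum.elim_inl, Sum.elim_inr, Finset.sum_const, Finset.card_univ, Fintype.card_fin,
    nsmul_eq_mul, a, b]
  field_simp
  ring

/-- The adjacency coronal of the complete bipartite graph `K_{p,q}` equals
`((p+q)x + 2pq)/(x² - pq)`. -/
theorem coronal_adj_completeBipartite (p q : ℕ) (hp : 1 ≤ p) (hq : 1 ≤ q) (x : ℝ)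
    (hx : x ^ 2 ≠ (p : ℝ) * q)
    (hinv : IsUnit (x • (1 : Matrix (Fin p ⊕ Fin q) (Fin p ⊕ Fin q) ℝ)
      - (completeBipartiteGraph (Fin p) (Fin q)).adjMatrix ℝ).det) :
    coronal ((completeBipartiteGraph (Fin p) (Fin q)).adjMatrix ℝ) x =
      ((p + q : ℝ) * x + 2 * p * q) / (x ^ 2 - p * q) :=
  coronal_adj_completeBipartite_general p q x hx hinv
end

section
/- Let G be a graph on n vertices and p, q ≥ 1 integers. Then 0 is an adjacency eigenvalue of G ⋆ K_{p,q} with multiplicity at least n(p + q − 2), and for each adjacency eigenvalue λⱼ(G) of G, every root of x³ − λⱼ(G)x² − (pq + (p+q)λⱼ(G)²)x − pq·λⱼ(G)(2λⱼ(G) − 1) = 0 is an adjacency eigenvalue of G ⋆ K_{p,q}. -/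
open Matrix Polynomial BigOperators

/-- The neighbourhood corona `G₁ ⋆ G₂` of two simple graphs. -/
def ncorona {V₁ V₂ : Type*} (G₁ : SimpleGraph V₁) (G₂ : SimpleGraph V₂) :
    SimpleGraph (V₁ ⊕ V₁ × V₂) where
  Adj := fun a b =>
    match a, b with
    | Sum.inl v, Sum.inl w => G₁.Adj v w
    | Sum.inl v, Sum.inr iu => G₁.Adj v iu.1
    | Sum.inr iu, Sum.inl w => G₁.Adj w iu.1
    | Sum.inr iu, Sum.inr jw => iu.1 = jw.1 ∧ G₂.Adj iu.2 jw.2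
  symm := by
    refine ⟨?_⟩
    rintro (v | ⟨i, u⟩) (w | ⟨j, z⟩) h
    · exact G₁.adj_symm h
    · exact h
    · exact h
    · exact ⟨h.1.symm, G₂.adj_symm h.2⟩
  loopless := by
    refine ⟨?_⟩
    rintro (v | ⟨i, u⟩) h
    · exact G₁.irrefl h
    · exact G₂.irrefl h.2

noncomputable instance {V₁ V₂ : Type*} (G₁ : SimpleGraph V₁) (G₂ : SimpleGraph V₂) :
    DecidableRel (ncorona G₁ G₂).Adj := Classical.decRel _

/-!
The vertices on each side of `K_{p,q}` are twins, so the adjacency matrix of `G ⋆ K_{p,q}` arises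
from that of `G ⋆ K_{1,1}` by repeating rows and columns. Its rank is therefore at most `3n`, and
the kernel, of dimension at least `n(p + q + 1) - 3n`, bounds the multiplicity of the root `0`.

For the cubic, an eigenvector `z` of `G` for `λ` is lifted to `G ⋆ K_{p,q}` with weights `a`, `b`,
`c` on a vertex `v` of `G` and on the copies of `v` in the two sides of `K_{p,q}`. The lift is an
eigenvector for `x` exactly when `(a, b, c)` is an eigenvector for `x` of the quotient matrix
`[[λ, pλ, qλ], [λ, 0, q], [λ, p, 0]]`, whose characteristic polynomial is the cubic.
-/

open Sum

namespace Matrix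

variable {n K : Type*} [Fintype n] [DecidableEq n] [Field K]

theorem isRoot_charpoly_iff_exists_mulVec_eq_smul (A : Matrix n n K) (x : K) :
    A.charpoly.IsRoot x ↔ ∃ v ≠ 0, A *ᵥ v = x • v := by
  rw [← charpoly_toLin', ← Module.End.hasEigenvalue_iff_isRoot_charpoly,
    Module.End.hasEigenvalue_iff, Submodule.ne_bot_iff]
  simp only [Module.End.mem_eigenspace_iff, toLin'_apply]
  exact ⟨fun ⟨v, hv, h⟩ => ⟨v, h, hv⟩, fun ⟨v, h, hv⟩ => ⟨v, hv, h⟩⟩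

theorem card_sub_rank_le_rootMultiplicity_zero (A : Matrix n n K) :
    Fintype.card n - A.rank ≤ A.charpoly.rootMultiplicity 0 := by
  have hker := A.toLin'.finrank_eigenspace_le 0
  rw [Module.End.eigenspace_zero, charpoly_toLin'] at hker
  have hsum := A.toLin'.finrank_range_add_finrank_ker
  rw [Module.finrank_fintype_fun_eq_card] at hsum
  have hrank : A.rank = Module.finrank K (LinearMap.range (toLin' A)) := rfl
  omega

end Matrix

namespace SimpleGraph

theorem comap_sumMap_completeBipartiteGraph {V W V' W' : Type*} (f : V → V') (g : W → W') :
    (completeBipartiteGraph V' W').comap (Sum.map f g) = completeBipartiteGraph V W := by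
  ext (v | v) (w | w) <;> simp

theorem adjMatrix_completeBipartiteGraph_mulVec_elim {V W R : Type*} [Fintype V] [Fintype W]
    [DecidableEq V] [DecidableEq W] [NonAssocSemiring R] (s t : R) :
    (completeBipartiteGraph V W).adjMatrix R *ᵥ Sum.elim (fun _ => s) (fun _ => t) =
      Sum.elim (fun _ => Fintype.card W • t) (fun _ => Fintype.card V • s) := by
  ext (v | w) <;> simp [mulVec, dotProduct, adjMatrix_apply, Fintype.sum_sum_type]

end SimpleGraph

section NCorona

variable {V₁ V₂ : Type*} (G₁ : SimpleGraph V₁) (G₂ : SimpleGraph V₂)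

@[simp] theorem ncorona_adj_inl_inl (v w : V₁) :
    (ncorona G₁ G₂).Adj (inl v) (inl w) ↔ G₁.Adj v w :=
  Iff.rfl

@[simp] theorem ncorona_adj_inl_inr (v : V₁) (wu : V₁ × V₂) :
    (ncorona G₁ G₂).Adj (inl v) (inr wu) ↔ G₁.Adj v wu.1 :=
  Iff.rfl

@[simp] theorem ncorona_adj_inr_inl (vu : V₁ × V₂) (w : V₁) :
    (ncorona G₁ G₂).Adj (inr vu) (inl w) ↔ G₁.Adj w vu.1 :=
  Iff.rfl

@[simp] theorem ncorona_adj_inr_inr (vu wu : V₁ × V₂) :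
    (ncorona G₁ G₂).Adj (inr vu) (inr wu) ↔ vu.1 = wu.1 ∧ G₂.Adj vu.2 wu.2 :=
  Iff.rfl

theorem adjMatrix_ncorona_comap_right {W : Type*} (R : Type*) [Zero R] [One R] (f : W → V₂) :
    (ncorona G₁ (G₂.comap f)).adjMatrix R =
      ((ncorona G₁ G₂).adjMatrix R).submatrix (Sum.map id (Prod.map id f))
        (Sum.map id (Prod.map id f)) := by
  ext i j
  simp only [SimpleGraph.adjMatrix_apply, submatrix_apply]
  refine if_congr ?_ rfl rfl
  rcases i with _ | ⟨_, _⟩ <;> rcases j with _ | ⟨_, _⟩ <;> exact Iff.rfl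

theorem rank_adjMatrix_ncorona_completeBipartiteGraph_le [Fintype V₁] (R : Type*) [CommRing R]
    [StrongRankCondition R] (p q : ℕ) :
    ((ncorona G₁ (completeBipartiteGraph (Fin p) (Fin q))).adjMatrix R).rank ≤
      3 * Fintype.card V₁ := by
  rw [← SimpleGraph.comap_sumMap_completeBipartiteGraph (fun _ => ()) (fun _ => ()),
    adjMatrix_ncorona_comap_right]
  refine (rank_submatrix_le _ _ _).trans ((rank_le_card_width _).trans_eq ?_)
  simp only [Fintype.card_sum, Fintype.card_prod, Fintype.card_unit]
  ring

variable [Fintype V₁] [DecidableRel G₁.Adj] [Fintype V₂]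

theorem adjMatrix_ncorona_mulVec_inl {R : Type*} [NonAssocSemiring R] (y : V₁ ⊕ V₁ × V₂ → R)
    (v : V₁) :
    ((ncorona G₁ G₂).adjMatrix R *ᵥ y) (inl v) =
      (G₁.adjMatrix R *ᵥ fun w => y (inl w) + ∑ u, y (inr (w, u))) v := by
  simp only [mulVec, dotProduct, SimpleGraph.adjMatrix_apply, Fintype.sum_sum_type,
    Fintype.sum_prod_type, ncorona_adj_inl_inl, ncorona_adj_inl_inr, ite_mul, one_mul, zero_mul,
    ← Finset.sum_add_distrib]
  refine Finset.sum_congr rfl fun w _ => ?_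
  split_ifs <;> simp

theorem adjMatrix_ncorona_mulVec_inr [DecidableRel G₂.Adj] {R : Type*} [NonAssocSemiring R]
    (y : V₁ ⊕ V₁ × V₂ → R) (v : V₁) (u : V₂) :
    ((ncorona G₁ G₂).adjMatrix R *ᵥ y) (inr (v, u)) =
      (G₁.adjMatrix R *ᵥ fun w => y (inl w)) v +
        (G₂.adjMatrix R *ᵥ fun u' => y (inr (v, u'))) u := by
  classical
  simp [mulVec, dotProduct, SimpleGraph.adjMatrix_apply, Fintype.sum_sum_type,
    Fintype.sum_prod_type, G₁.adj_comm, ite_and]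

theorem isRoot_charpoly_adjMatrix_ncorona [DecidableEq V₁] [DecidableEq V₂] [DecidableRel G₂.Adj]
    {K : Type*} [Field K] {lam x a : K} {c : V₂ → K}
    (hlam : (G₁.adjMatrix K).charpoly.IsRoot lam) (hac : a ≠ 0 ∨ ∃ u, c u ≠ 0)
    (hbase : (a + ∑ u, c u) * lam = x * a)
    (hcopy : ∀ u, a * lam + (G₂.adjMatrix K *ᵥ c) u = x * c u) :
    ((ncorona G₁ G₂).adjMatrix K).charpoly.IsRoot x := by
  obtain ⟨z, hz, hAz⟩ := ((G₁.adjMatrix K).isRoot_charpoly_iff_exists_mulVec_eq_smul lam).mp hlam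
  obtain ⟨v, hv⟩ := Function.ne_iff.mp hz
  refine ((ncorona G₁ G₂).adjMatrix K).isRoot_charpoly_iff_exists_mulVec_eq_smul x |>.mpr
    ⟨Sum.elim (a • z) (fun wu => c wu.2 * z wu.1), ?_, ?_⟩
  · rcases hac with ha | ⟨u, hu⟩
    · exact Function.ne_iff.mpr ⟨inl v, by simpa using ⟨ha, hv⟩⟩
    · exact Function.ne_iff.mpr ⟨inr (v, u), by simpa using ⟨hu, hv⟩⟩
  · ext (w | ⟨w, u⟩)
    · have hsum : (fun w' => a * z w' + ∑ u, c u * z w') = (a + ∑ u, c u) • z := by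
        ext w'
        simp [add_mul, Finset.sum_mul]
      simp only [adjMatrix_ncorona_mulVec_inl, elim_inl, elim_inr, Pi.smul_apply, smul_eq_mul,
        hsum, mulVec_smul, hAz]
      linear_combination z w * hbase
    · have hcopies : (fun u' => c u' * z w) = z w • c := by
        ext u'
        simp [mul_comm]
      simp only [adjMatrix_ncorona_mulVec_inr, elim_inl, elim_inr, hcopies]
      rw [mulVec_smul, mulVec_smul, hAz]
      simp only [Pi.smul_apply, smul_eq_mul, elim_inr]
      linear_combination z w * hcopy u

end NCorona

theorem exists_ne_zero_quotient_eigenvector {K : Type*} [Field K] {lam x p q : K}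
    (hx : x ^ 3 - lam * x ^ 2 - (p * q + (p + q) * lam ^ 2) * x - p * q * lam * (2 * lam - 1) = 0) :
    ∃ w : Fin 3 → K, w ≠ 0 ∧ (w 0 + p * w 1 + q * w 2) * lam = x * w 0 ∧
      w 0 * lam + q * w 2 = x * w 1 ∧ w 0 * lam + p * w 1 = x * w 2 := by
  have hdet : (!![x - lam, -(p * lam), -(q * lam); -lam, x, -q; -lam, -p, x]).det = 0 := by
    rw [det_fin_three]
    simp only [of_apply, cons_val', cons_val_zero, cons_val_fin_one, cons_val_one, cons_val, mul_neg,
      neg_mul, neg_neg]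
    linear_combination hx
  obtain ⟨w, hw, hMw⟩ := exists_mulVec_eq_zero_iff.mpr hdet
  have row₀ := congrFun hMw 0
  have row₁ := congrFun hMw 1
  have row₂ := congrFun hMw 2
  simp only [mulVec, dotProduct, Fin.sum_univ_three, of_apply, cons_val', cons_val_fin_one,
    cons_val_zero, cons_val_one, cons_val, neg_mul, Pi.zero_apply] at row₀ row₁ row₂
  exact ⟨w, hw, by linear_combination -row₀, by linear_combination -row₁,
    by linear_combination -row₂⟩

theorem isRoot_charpoly_adjMatrix_ncorona_completeBipartiteGraph {V : Type*} [Fintype V]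
    [DecidableEq V] (G : SimpleGraph V) [DecidableRel G.Adj] {K : Type*} [Field K] {p q : ℕ}
    (hp : 1 ≤ p) (hq : 1 ≤ q) {lam x : K} (hlam : (G.adjMatrix K).charpoly.IsRoot lam)
    (hx : x ^ 3 - lam * x ^ 2 - ((p : K) * q + ((p : K) + q) * lam ^ 2) * x
      - (p : K) * q * lam * (2 * lam - 1) = 0) :
    ((ncorona G (completeBipartiteGraph (Fin p) (Fin q))).adjMatrix K).charpoly.IsRoot x := by
  obtain ⟨w, hw, hbase, hleft, hright⟩ := exists_ne_zero_quotient_eigenvector hx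
  refine isRoot_charpoly_adjMatrix_ncorona G _ hlam (a := w 0)
    (c := Sum.elim (fun _ => w 1) (fun _ => w 2)) ?_ ?_ ?_
  · obtain ⟨i, hi⟩ := Function.ne_iff.mp hw
    fin_cases i
    · exact .inl hi
    · exact .inr ⟨.inl ⟨0, hp⟩, hi⟩
    · exact .inr ⟨.inr ⟨0, hq⟩, hi⟩
  · simp only [Fintype.sum_sum_type, elim_inl, elim_inr, Finset.sum_const, Finset.card_univ,
      Fintype.card_fin, nsmul_eq_mul]
    linear_combination hbase
  · rw [SimpleGraph.adjMatrix_completeBipartiteGraph_mulVec_elim]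
    rintro (u | u)
    · simpa using hleft
    · simpa using hright

/-- Corollary 2.3: `0` is an adjacency eigenvalue of `G ⋆ K_{p,q}` with multiplicity at least
`n(p+q-2)`, and for each adjacency eigenvalue `λ` of `G`, every root of
`x³ - λx² - (pq + (p+q)λ²)x - pqλ(2λ - 1) = 0` is an adjacency eigenvalue of `G ⋆ K_{p,q}`. -/
theorem ncorona_completeBipartite_adj_spectrum {V : Type*} [Fintype V] [DecidableEq V]
    (G : SimpleGraph V) [DecidableRel G.Adj] (n p q : ℕ)
    (hn : Fintype.card V = n) (hp : 1 ≤ p) (hq : 1 ≤ q) :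
    n * (p + q - 2) ≤
      (((ncorona G (completeBipartiteGraph (Fin p) (Fin q))).adjMatrix ℝ).charpoly).rootMultiplicity 0 ∧
    ∀ lam : ℝ, ((G.adjMatrix ℝ).charpoly).IsRoot lam →
      ∀ x : ℝ, x ^ 3 - lam * x ^ 2 - ((p : ℝ) * q + ((p : ℝ) + q) * lam ^ 2) * x
          - (p : ℝ) * q * lam * (2 * lam - 1) = 0 →
        (((ncorona G (completeBipartiteGraph (Fin p) (Fin q))).adjMatrix ℝ).charpoly).IsRoot x := by
  refine ⟨?_, fun lam hlam x hx =>
    isRoot_charpoly_adjMatrix_ncorona_completeBipartiteGraph G hp hq hlam hx⟩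
  have hmult := Matrix.card_sub_rank_le_rootMultiplicity_zero
    ((ncorona G (completeBipartiteGraph (Fin p) (Fin q))).adjMatrix ℝ)
  have hrank := rank_adjMatrix_ncorona_completeBipartiteGraph_le G ℝ p q
  obtain ⟨k, hk⟩ : ∃ k, p + q = k + 2 := ⟨p + q - 2, by omega⟩
  have hcard : Fintype.card (V ⊕ V × (Fin p ⊕ Fin q)) = n * k + 3 * n := by
    simp only [Fintype.card_sum, Fintype.card_prod, Fintype.card_fin, hn, hk]
    ring
  rw [hk, Nat.add_sub_cancel]
  omega
end

section
/- For integers n, k ≥ 1, the function f_{n,k}(x) = x + (n+1)k − √((4n+1)x² − 2(3n+1)kx + ((n+1)k)²) is well-defined on all of ℝ (the expression under the square root is always nonnegative), is strictly increasing on [0, k], strictly decreasing on [k, (2n+1)k/n], and satisfies f_{n,k}(x) > 0 for x ∈ (0, (2n+1)k/n). -/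
/-- The function `f_{n,k}(x) = x + (n+1)k - √((4n+1)x² - 2(3n+1)kx + ((n+1)k)²)`. -/
noncomputable def fnk (n k : ℕ) (x : ℝ) : ℝ :=
  x + ((n : ℝ) + 1) * k -
    Real.sqrt ((4 * (n : ℝ) + 1) * x ^ 2 - 2 * (3 * (n : ℝ) + 1) * k * x
      + (((n : ℝ) + 1) * k) ^ 2)

/-!
Write `q` for the radicand and `L(x) = (4n+1)x - (3n+1)k`. Completing the square,
`(4n+1) q = L² + 4n³k²`, so `q ≥ 0`. Since `q' = 2L`, `f' = 1 - L/√q`, and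
`(4n+1)(q - L²) = 4n(n²k² - L²)`. As `L` is increasing with `L(k) = nk`, this gives `L < √q`
for `x < k` and `√q < L` for `x > k`: `f` increases on `(-∞, k]` and decreases on `[k, ∞)`.
Finally `(x + (n+1)k)² - q = 4x((2n+1)k - nx)`, which is positive on `(0, (2n+1)k/n)`.
-/

open Set

namespace Fnk

variable {a b x : ℝ}

def radicand (a b x : ℝ) : ℝ :=
  (4 * a + 1) * x ^ 2 - 2 * (3 * a + 1) * b * x + ((a + 1) * b) ^ 2

theorem fnk_apply (n k : ℕ) (x : ℝ) :
    fnk n k x = x + ((n : ℝ) + 1) * k - √(radicand n k x) := rfl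

theorem mul_radicand_eq (a b x : ℝ) :
    (4 * a + 1) * radicand a b x
      = ((4 * a + 1) * x - (3 * a + 1) * b) ^ 2 + 4 * a ^ 3 * b ^ 2 := by
  unfold radicand; ring

theorem mul_radicand_sub_sq (a b x : ℝ) :
    (4 * a + 1) * (radicand a b x - ((4 * a + 1) * x - (3 * a + 1) * b) ^ 2)
      = 4 * a * ((a * b) ^ 2 - ((4 * a + 1) * x - (3 * a + 1) * b) ^ 2) := by
  unfold radicand; ring

theorem sq_sub_radicand (a b x : ℝ) :
    (x + (a + 1) * b) ^ 2 - radicand a b x = 4 * x * ((2 * a + 1) * b - a * x) := by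
  unfold radicand; ring

theorem radicand_nonneg (ha : 0 ≤ a) : 0 ≤ radicand a b x := by
  have : 0 ≤ (4 * a + 1) * radicand a b x := by rw [mul_radicand_eq]; positivity
  exact nonneg_of_mul_nonneg_right this (by linarith)

theorem radicand_pos_of_ne (ha : 0 < a) (hx : x ≠ b) : 0 < radicand a b x := by
  refine (radicand_nonneg ha.le).lt_of_ne' fun h0 => hx ?_
  have h := mul_radicand_eq a b x
  rw [h0, mul_zero, eq_comm, add_eq_zero_iff_of_nonneg (sq_nonneg _) (by positivity)] at h
  obtain ⟨hL, hb⟩ := h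
  have hb : b = 0 := by simpa [ha.ne'] using hb
  subst hb
  have : 0 < 4 * a + 1 := by linarith
  simpa [this.ne'] using hL

theorem hasDerivAt_fnk {n k : ℕ} (hx : radicand n k x ≠ 0) :
    HasDerivAt (fnk n k)
      (1 - ((4 * n + 1) * x - (3 * n + 1) * k) / √(radicand n k x)) x := by
  have hq : HasDerivAt (radicand n k) (2 * ((4 * n + 1) * x - (3 * n + 1) * k)) x :=
    ((((hasDerivAt_id x).pow 2).const_mul (4 * (n : ℝ) + 1)).sub
      ((hasDerivAt_id x).const_mul (2 * (3 * (n : ℝ) + 1) * k))).add_const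
      ((((n : ℝ) + 1) * k) ^ 2) |>.congr_deriv (by simp; ring)
  have hs : √(radicand n k x) ≠ 0 :=
    Real.sqrt_ne_zero'.2 ((radicand_nonneg n.cast_nonneg).lt_of_ne' hx)
  exact (((hasDerivAt_id x).add_const (((n : ℝ) + 1) * k)).sub (hq.sqrt hx)).congr_deriv
    (by field_simp)

theorem sub_lt_sqrt_radicand (ha : 0 < a) (hx : x < b) :
    (4 * a + 1) * x - (3 * a + 1) * b < √(radicand a b x) := by
  rcases lt_or_ge ((4 * a + 1) * x - (3 * a + 1) * b) 0 with hL | hL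
  · exact hL.trans_le (Real.sqrt_nonneg _)
  have hc : (0 : ℝ) ≤ 4 * a + 1 := by linarith
  refine (Real.lt_sqrt hL).2 (sub_pos.1 (pos_of_mul_pos_right ?_ hc))
  rw [mul_radicand_sub_sq]
  have hLb : (4 * a + 1) * x - (3 * a + 1) * b < a * b := by nlinarith
  have : ((4 * a + 1) * x - (3 * a + 1) * b) ^ 2 < (a * b) ^ 2 := by gcongr
  exact mul_pos (by positivity) (sub_pos.2 this)

theorem sqrt_radicand_lt_sub (ha : 0 < a) (hb : 0 ≤ b) (hx : b < x) :
    √(radicand a b x) < (4 * a + 1) * x - (3 * a + 1) * b := by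
  have hLb : a * b < (4 * a + 1) * x - (3 * a + 1) * b := by nlinarith
  have hL : 0 < (4 * a + 1) * x - (3 * a + 1) * b := (mul_nonneg ha.le hb).trans_lt hLb
  have hc : (0 : ℝ) ≤ 4 * a + 1 := by linarith
  refine (Real.sqrt_lt' hL).2 (sub_neg.1 (neg_of_mul_neg_right ?_ hc))
  rw [mul_radicand_sub_sq]
  have : (a * b) ^ 2 < ((4 * a + 1) * x - (3 * a + 1) * b) ^ 2 := by gcongr
  exact mul_neg_of_pos_of_neg (by positivity) (sub_neg.2 this)

variable {n k : ℕ}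

theorem continuous_fnk : Continuous (fnk n k) := by
  unfold fnk; fun_prop

theorem strictMonoOn_fnk (hn : 0 < n) : StrictMonoOn (fnk n k) (Iic k) := by
  refine strictMonoOn_of_deriv_pos (convex_Iic _) continuous_fnk.continuousOn fun x hx => ?_
  rw [interior_Iic] at hx
  have hq := radicand_pos_of_ne (Nat.cast_pos.2 hn) hx.ne
  rw [(hasDerivAt_fnk hq.ne').deriv, sub_pos, div_lt_one (Real.sqrt_pos.2 hq)]
  exact sub_lt_sqrt_radicand (Nat.cast_pos.2 hn) hx

theorem strictAntiOn_fnk (hn : 0 < n) : StrictAntiOn (fnk n k) (Ici k) := by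
  refine strictAntiOn_of_deriv_neg (convex_Ici _) continuous_fnk.continuousOn fun x hx => ?_
  rw [interior_Ici] at hx
  have hq := radicand_pos_of_ne (Nat.cast_pos.2 hn) hx.ne'
  rw [(hasDerivAt_fnk hq.ne').deriv, sub_neg, one_lt_div (Real.sqrt_pos.2 hq)]
  exact sqrt_radicand_lt_sub (Nat.cast_pos.2 hn) k.cast_nonneg hx

theorem fnk_pos (hn : 0 < n) (hx : x ∈ Ioo 0 ((2 * n + 1) * k / (n : ℝ))) : 0 < fnk n k x := by
  obtain ⟨hx₀, hx₁⟩ := hx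
  rw [lt_div_iff₀ (Nat.cast_pos.2 hn)] at hx₁
  have hc : 0 < x + ((n : ℝ) + 1) * k := by positivity
  have hq : radicand n k x < (x + ((n : ℝ) + 1) * k) ^ 2 := by
    rw [← sub_pos, sq_sub_radicand]
    exact mul_pos (by positivity) (by linarith)
  rw [fnk_apply, sub_pos]
  exact (Real.sqrt_lt' hc).2 hq

end Fnk

theorem fnk_properties_general (n k : ℕ) (hn : 1 ≤ n) :
    (∀ x : ℝ, 0 ≤ (4 * (n : ℝ) + 1) * x ^ 2 - 2 * (3 * (n : ℝ) + 1) * k * x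
        + (((n : ℝ) + 1) * k) ^ 2) ∧
    StrictMonoOn (fnk n k) (Set.Icc (0 : ℝ) k) ∧
    StrictAntiOn (fnk n k) (Set.Icc (k : ℝ) ((2 * (n : ℝ) + 1) * k / n)) ∧
    ∀ x ∈ Set.Ioo (0 : ℝ) ((2 * (n : ℝ) + 1) * k / n), 0 < fnk n k x :=
  ⟨fun _ => Fnk.radicand_nonneg n.cast_nonneg,
    (Fnk.strictMonoOn_fnk hn).mono Icc_subset_Iic_self,
    (Fnk.strictAntiOn_fnk hn).mono Icc_subset_Ici_self,
    fun _ => Fnk.fnk_pos hn⟩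

/-- `f_{n,k}` is well-defined on ℝ (the expression under the square root is nonnegative),
strictly increasing on `[0, k]`, strictly decreasing on `[k, (2n+1)k/n]`, and positive on
`(0, (2n+1)k/n)`. -/
theorem fnk_properties (n k : ℕ) (hn : 1 ≤ n) (hk : 1 ≤ k) :
    (∀ x : ℝ, 0 ≤ (4 * (n : ℝ) + 1) * x ^ 2 - 2 * (3 * (n : ℝ) + 1) * k * x
        + (((n : ℝ) + 1) * k) ^ 2) ∧
    StrictMonoOn (fnk n k) (Set.Icc (0 : ℝ) k) ∧
    StrictAntiOn (fnk n k) (Set.Icc (k : ℝ) ((2 * (n : ℝ) + 1) * k / n)) ∧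
    ∀ x ∈ Set.Ioo (0 : ℝ) ((2 * (n : ℝ) + 1) * k / n), 0 < fnk n k x :=
  fnk_properties_general n k hn
end
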